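/- Let (X, 𝓘) be a Polish ideal space with 𝓘 c.c.c. and Y a Polish space. Suppose F is an analytic subset of X × Y satisfying: (1) for every y ∈ Y, the vertical section F^y = {x ∈ X : (x, y) ∈ F} belongs to 𝓘; (2) X ∖ π_X(F) ∈ 𝓘, where π_X is the projection onto X; (3) for every x ∈ X, the horizontal section F_x = {y ∈ Y : (x, y) ∈ F} is finite. Then there exists a set T ⊆ Y such that F⁻¹(T) = {x ∈ X : F_x ∩ T ≠ ∅} is completely 𝓘-nonmeasurable. -/

import Mathlib

/-!
Enumerate the `𝓘`-positive Borel sets as `(C i)`, indexed by a well-order all of whose proper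
initial segments have fewer than `𝔠` elements (there are at most `𝔠` Borel sets). By transfinite
recursion choose `a i, b i ∈ C i` and `y i ∈ F_{b i}` such that `y j ∉ F_{a i}` for all `i, j`:
at stage `i`, `a i` has to avoid the fewer than `𝔠` earlier points `y j`, and `y i` has to avoid
the sections of `a i` and of the earlier `a j`, fewer than `𝔠` points since sections are finite.
Then `T = {y i}` works: `b i ∈ F⁻¹(T) ∩ C i` and `a i ∈ C i \ F⁻¹(T)`.

Both choices rest on a perfect-set dichotomy for an analytic set `K` of `k`-tuples in `Y`: if every
tuple in `K` has a coordinate in a set of size `< 𝔠`, then a countable set already does, since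
otherwise a Cantor scheme produces `𝔠` tuples in `K` that differ in every coordinate.
To find `y i`: otherwise `F[C i]` is analytic of size `< 𝔠`, hence countable, and (1), (2) put
`C i` into `𝓘`. To find `a i`: some level `{x | #F_x = k}` meets `C i` in an `𝓘`-positive set,
which contains a positive Borel set `B`, because analytic sets are `𝓘`-measurable for a c.c.c.
`𝓘`. If every section over `B` met `R`, the injective `k`-tuples listing these sections would be
hit by a countable set, and (1) would put `B` into `𝓘`.
-/

open Set Function MeasureTheory PiNat
open scoped Cardinal

universe u

namespace PiNat

variable {β : Type*}

theorem exists_cylinder_subset [TopologicalSpace β] [DiscreteTopology β] {O : Set (ℕ → β)}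
    (hO : IsOpen O) {x : ℕ → β} (hx : x ∈ O) : ∃ n, cylinder x n ⊆ O := by
  obtain ⟨_, ⟨y, n, rfl⟩, hxy, hyO⟩ :=
    (isTopologicalBasis_cylinders fun _ => β).exists_subset_of_mem_open hx hO
  exact ⟨n, mem_cylinder_iff_eq.1 hxy ▸ hyO⟩

theorem exists_forall_mem_cylinder {u : ℕ → ℕ → β} {len : ℕ → ℕ}
    (hanti : Antitone fun k => cylinder (u k) (len k)) (hlen : ∀ k, k ≤ len k) :
    ∃ z : ℕ → β, ∀ k, z ∈ cylinder (u k) (len k) := by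
  have hu : ∀ {k l}, k ≤ l → ∀ i < len k, u l i = u k i := fun hkl =>
    mem_cylinder_iff.1 (hanti hkl (self_mem_cylinder _ _))
  refine ⟨fun j => u (j + 1) j, fun k => mem_cylinder_iff.2 fun i hi => ?_⟩
  rcases le_total k (i + 1) with hk | hk
  · exact hu hk i hi
  · exact (hu hk i (hlen (i + 1))).symm

theorem exists_forall_res {P : List β → Prop} (h0 : P [])
    (hstep : ∀ t, P t → ∃ b, P (b :: t)) : ∃ σ : ℕ → β, ∀ n, P (res σ n) := by
  choose c hc using hstep
  let node : ℕ → {t // P t} := fun n => Nat.rec ⟨[], h0⟩ (fun _ t => ⟨_, hc t.1 t.2⟩) n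
  refine ⟨fun n => c (node n).1 (node n).2, fun n => ?_⟩
  suffices res _ n = (node n).1 from this ▸ (node n).2
  induction n with
  | zero => rfl
  | succ n ih => rw [res_succ, ih]

theorem eq_of_forall_mem_closure_image_cylinder [TopologicalSpace β] [DiscreteTopology β]
    {α : Type*} [TopologicalSpace α] [T2Space α] {g : (ℕ → β) → α} (hg : Continuous g)
    {σ : ℕ → β} {x : α} (hx : ∀ n, x ∈ closure (g '' cylinder σ n)) : x = g σ := by
  by_contra hne
  obtain ⟨U, V, hU, hV, hxU, hσV, hUV⟩ := t2_separation hne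
  obtain ⟨n, hn⟩ := exists_cylinder_subset (hV.preimage hg) hσV
  obtain ⟨_, hyU, y, hy, rfl⟩ := mem_closure_iff.1 (hx n) U hU hxU
  exact hUV.ne_of_mem hyU (hn hy) rfl

/-- The cylinders of `ℕ → β`, indexed by the countable type `List β` (see `stem_res`). -/
def stem (t : List β) : Set (ℕ → β) := {w | res w t.length = t}

theorem stem_nil : stem ([] : List β) = univ := by simp [stem]

theorem stem_res (x : ℕ → β) (n : ℕ) : stem (res x n) = cylinder x n := by
  rw [cylinder_eq_res, stem, res_length]

theorem stem_eq_iUnion_cons (t : List β) : stem t = ⋃ b, stem (b :: t) := by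
  ext w
  simp [stem, res_succ]

end PiNat

theorem MeasureTheory.AnalyticSet.inter {α : Type*} [TopologicalSpace α] [T2Space α]
    {s t : Set α} (hs : AnalyticSet s) (ht : AnalyticSet t) : AnalyticSet (s ∩ t) := by
  rw [inter_eq_iInter]
  exact .iInter fun b => by cases b <;> assumption

theorem MeasureTheory.analyticSet_iInter_of_countable {α ι : Type*} [TopologicalSpace α]
    [PolishSpace α] [Countable ι] {s : ι → Set α} (hs : ∀ i, AnalyticSet (s i)) :
    AnalyticSet (⋂ i, s i) := by
  cases isEmpty_or_nonempty ι
  · simpa using isClosed_univ.analyticSet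
  · exact .iInter hs

theorem IsOpen.analyticSet {α : Type*} [TopologicalSpace α] [PolishSpace α] {s : Set α}
    (hs : IsOpen s) : AnalyticSet s := by
  simpa using hs.analyticSet_image continuous_id

theorem isOpen_setOf_injective {ι Y : Type*} [Finite ι] [TopologicalSpace Y] [T2Space Y] :
    IsOpen {g : ι → Y | Injective g} := by
  have : {g : ι → Y | Injective g} = ⋂ (i) (j) (_ : i ≠ j), {g | g i ≠ g j} := by
    ext g
    simp only [mem_ofPred_eq, mem_iInter]
    exact ⟨fun hg i j hij h => hij (hg h), fun h i j hij => by_contra fun hne => h i j hne hij⟩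
  rw [this]
  exact isOpen_iInter_of_finite fun i => isOpen_iInter_of_finite fun j =>
    isOpen_iInter_of_finite fun _ => isOpen_ne_fun (continuous_apply i) (continuous_apply j)

theorem Cardinal.exists_wellOrder_mk_lt {ι : Type*} {κ : Cardinal} (h : #ι ≤ κ) :
    ∃ r : ι → ι → Prop, IsWellOrder ι r ∧ ∀ i, #{j // r j i} < κ := by
  obtain ⟨r, hr, hord⟩ := Cardinal.exists_ord_eq ι
  exact ⟨r, hr, fun i => (Cardinal.card_typein_lt i hord).trans_le h⟩

theorem WellFounded.exists_forall_choice {ι α : Type*} {r : ι → ι → Prop} (hr : WellFounded r)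
    {P : ∀ i, ({j // r j i} → α) → α → Prop} (h : ∀ i prior, ∃ a, P i prior a) :
    ∃ v : ι → α, ∀ i, P i (fun j => v j) (v i) := by
  choose c hc using h
  refine ⟨hr.fix fun i ih => c i fun j => ih j j.2, fun i => ?_⟩
  rw [hr.fix_eq]
  exact hc _ _

theorem MeasurableSpace.mk_setOf_measurableSet_le_continuum {α : Type*} [MeasurableSpace α]
    [MeasurableSpace.CountablyGenerated α] : #{s : Set α | MeasurableSet s} ≤ 𝔠 := by
  obtain ⟨b, hb, hgen⟩ := MeasurableSpace.CountablyGenerated.isCountablyGenerated (α := α)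
  rw [hgen]
  exact MeasurableSpace.cardinal_measurableSet_le_continuum
    (hb.le_aleph0.trans Cardinal.aleph0_le_continuum)

structure IsSigmaIdeal {X : Type*} (I : Set (Set X)) : Prop where
  empty_mem : ∅ ∈ I
  mem_of_subset : ∀ {A B : Set X}, A ⊆ B → B ∈ I → A ∈ I
  iUnion_nat_mem : ∀ f : ℕ → Set X, (∀ n, f n ∈ I) → ⋃ n, f n ∈ I

def IsCCC {X : Type*} [MeasurableSpace X] (I : Set (Set X)) : Prop :=
  ∀ 𝒟 : Set (Set X), (∀ D ∈ 𝒟, MeasurableSet D ∧ D ∉ I) → 𝒟.PairwiseDisjoint id → 𝒟.Countable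

namespace IsSigmaIdeal

variable {X : Type*} {I : Set (Set X)} (hI : IsSigmaIdeal I)
include hI

theorem iUnion_mem {ι : Sort*} [Countable ι] {f : ι → Set X} (hf : ∀ i, f i ∈ I) :
    ⋃ i, f i ∈ I := by
  cases isEmpty_or_nonempty ι
  · simpa using hI.empty_mem
  obtain ⟨e, he⟩ := exists_surjective_nat ι
  rw [← he.iUnion_comp]
  exact hI.iUnion_nat_mem _ fun n => hf (e n)

theorem biUnion_mem {ι : Type*} {s : Set ι} (hs : s.Countable) {f : ι → Set X}
    (hf : ∀ i ∈ s, f i ∈ I) : ⋃ i ∈ s, f i ∈ I :=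
  have := hs.to_subtype
  biUnion_eq_iUnion s (fun i _ => f i) ▸ hI.iUnion_mem fun i => hf i i.2

theorem union_mem {A B : Set X} (hA : A ∈ I) (hB : B ∈ I) : A ∪ B ∈ I := by
  rw [union_eq_iUnion]
  exact hI.iUnion_mem fun b => by cases b <;> assumption

theorem setOf_exists_mem_mem {Y : Type*} {F : Set (X × Y)} (hsec : ∀ y, {x | (x, y) ∈ F} ∈ I)
    {R : Set Y} (hR : R.Countable) : {x | ∃ y ∈ R, (x, y) ∈ F} ∈ I := by
  have : {x | ∃ y ∈ R, (x, y) ∈ F} = ⋃ y ∈ R, {x | (x, y) ∈ F} := by ext; simp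
  exact this ▸ hI.biUnion_mem hR fun y _ => hsec y

variable [MeasurableSpace X]

theorem exists_measurableSet_hull (hccc : IsCCC I) (A : Set X) :
    ∃ H, A ⊆ H ∧ MeasurableSet H ∧ ∀ B, A ⊆ B → MeasurableSet B → H \ B ∈ I := by
  -- `H` is the complement of a maximal disjoint family of positive Borel sets avoiding `A`
  let Pos : Set (Set X) := {D | MeasurableSet D ∧ D ∉ I ∧ Disjoint D A}
  obtain ⟨𝒟, ⟨h𝒟Pos, h𝒟disj⟩, hmax⟩ :
      ∃ 𝒟, Maximal (fun 𝒟 => 𝒟 ⊆ Pos ∧ 𝒟.PairwiseDisjoint id) 𝒟 := by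
    refine zorn_subset _ fun c hcP hc => ⟨⋃₀ c, ⟨?_, ?_⟩, fun _ => subset_sUnion_of_mem⟩
    · exact sUnion_subset fun 𝒟 h𝒟 => (hcP h𝒟).1
    · exact (hc.pairwiseDisjoint_sUnion id).2 fun 𝒟 h𝒟 => (hcP h𝒟).2
  have h𝒟 : 𝒟.Countable := hccc 𝒟 (fun D hD => ⟨(h𝒟Pos hD).1, (h𝒟Pos hD).2.1⟩) h𝒟disj
  have hmeas : MeasurableSet (⋃₀ 𝒟) := .sUnion h𝒟 fun D hD => (h𝒟Pos hD).1
  refine ⟨(⋃₀ 𝒟)ᶜ, ?_, hmeas.compl, fun B hAB hB => ?_⟩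
  · exact subset_compl_comm.1 <| sUnion_subset fun D hD => (h𝒟Pos hD).2.2.subset_compl_right
  by_contra hpos
  have hE : (⋃₀ 𝒟)ᶜ \ B ∈ 𝒟 := by
    refine hmax ⟨insert_subset ⟨hmeas.compl.diff hB, hpos, ?_⟩ h𝒟Pos, ?_⟩ (subset_insert _ _)
      (mem_insert _ _)
    · exact disjoint_sdiff_left.mono_right hAB
    · refine h𝒟disj.insert fun D hD _ => ?_
      exact (disjoint_compl_left.mono_right (subset_sUnion_of_mem hD)).mono_left sdiff_subset
  have : (⋃₀ 𝒟)ᶜ \ B = ∅ :=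
    eq_empty_of_subset_empty fun x hx => hx.1 (subset_sUnion_of_mem hE hx)
  exact hpos (this ▸ hI.empty_mem)

theorem exists_measurable_approx_of_analyticSet [TopologicalSpace X] [T2Space X]
    [OpensMeasurableSpace X] (hccc : IsCCC I) {A : Set X} (hA : AnalyticSet A) :
    ∃ H N, MeasurableSet H ∧ MeasurableSet N ∧ N ∈ I ∧ A ⊆ H ∧ H \ N ⊆ A := by
  rw [AnalyticSet] at hA
  rcases hA with rfl | ⟨g, hg, rfl⟩
  · exact ⟨∅, ∅, .empty, .empty, hI.empty_mem, subset_rfl, by simp⟩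
  -- Borel hulls of the Suslin scheme `t ↦ g '' stem t`; cutting them down to closures forces a
  -- point that lies in all of them along a branch `σ` to be `g σ`
  choose H₀ hgH₀ hH₀ hH₀min using fun t : List ℕ => hI.exists_measurableSet_hull hccc (g '' stem t)
  set H := fun t => H₀ t ∩ closure (g '' stem t)
  have hH : ∀ t, MeasurableSet (H t) := fun t => (hH₀ t).inter isClosed_closure.measurableSet
  have hgH : ∀ t, g '' stem t ⊆ H t := fun t => subset_inter (hgH₀ t) subset_closure
  have hHcons : ∀ t, MeasurableSet (⋃ b, H (b :: t)) := fun t => .iUnion fun b => hH _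
  refine ⟨H [], ⋃ t, H t \ ⋃ b, H (b :: t), hH [], .iUnion fun t => (hH t).diff (hHcons t),
    hI.iUnion_mem fun t => hI.mem_of_subset (sdiff_subset_sdiff_left inter_subset_left) ?_,
    by simpa [stem_nil] using hgH [], ?_⟩
  · refine hH₀min t _ ?_ (hHcons t)
    rw [stem_eq_iUnion_cons, image_iUnion]
    exact iUnion_mono fun b => hgH _
  rintro x ⟨hx, hxN⟩
  obtain ⟨σ, hσ⟩ := exists_forall_res (P := fun t => x ∈ H t) hx fun t ht => by
    by_contra! h
    exact hxN (mem_iUnion.2 ⟨t, ht, by simpa using h⟩)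
  have hxσ : x = g σ := eq_of_forall_mem_closure_image_cylinder hg fun n => stem_res σ n ▸ (hσ n).2
  exact hxσ ▸ mem_range_self σ

theorem exists_measurableSet_subset_sdiff_notMem [TopologicalSpace X] [T2Space X]
    [OpensMeasurableSpace X] (hccc : IsCCC I) {A A' : Set X} (hA : AnalyticSet A)
    (hA' : AnalyticSet A') (h : A \ A' ∉ I) : ∃ B ⊆ A \ A', MeasurableSet B ∧ B ∉ I := by
  obtain ⟨H, N, hH, hN, hNI, hAH, hHN⟩ := hI.exists_measurable_approx_of_analyticSet hccc hA
  obtain ⟨H', N', hH', -, hN'I, hAH', hHN'⟩ := hI.exists_measurable_approx_of_analyticSet hccc hA'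
  refine ⟨(H \ N) \ H', fun x hx => ⟨hHN hx.1, fun hxA' => hx.2 (hAH' hxA')⟩,
    (hH.diff hN).diff hH', fun hB => h ?_⟩
  refine hI.mem_of_subset (fun x hx => ?_) (hI.union_mem hB (hI.union_mem hNI hN'I))
  obtain ⟨hxA, hxA'⟩ := hx
  by_cases hxN : x ∈ N
  · exact .inr (.inl hxN)
  by_cases hxH' : x ∈ H'
  · exact .inr (.inr (by_contra fun hxN' => hxA' (hHN' ⟨hxH', hxN'⟩)))
  · exact .inl ⟨⟨hAH hxA, hxN⟩, hxH'⟩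

end IsSigmaIdeal

section Hitting

variable {ι Y : Type*}

def Hits (C : Set Y) (K : Set (ι → Y)) : Prop := ∀ g ∈ K, ∃ i, g i ∈ C

theorem Hits.mono {C C' : Set Y} {K K' : Set (ι → Y)} (h : Hits C K) (hC : C ⊆ C')
    (hK : K' ⊆ K) : Hits C' K' :=
  fun g hg => (h g (hK hg)).imp fun _ hi => hC hi

variable (f : (ℕ → ℕ) → ι → Y)

def CountablyHit (s : Set (ℕ → ℕ)) : Prop := ∃ C : Set Y, C.Countable ∧ Hits C (f '' s)

def hitKernel : Set (ℕ → ℕ) := {u | ∀ n, ¬CountablyHit f (cylinder u n)}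

theorem countablyHit_compl_hitKernel : CountablyHit f (hitKernel f)ᶜ := by
  let Thin := {p : (ℕ → ℕ) × ℕ // CountablyHit f (cylinder p.1 p.2)}
  obtain ⟨T, hT, hTU⟩ := TopologicalSpace.isOpen_iUnion_countable
    (fun p : Thin => cylinder p.1.1 p.1.2) fun p => isOpen_cylinder _ _ _
  choose C hC hCp using fun p : Thin => p.2
  refine ⟨⋃ p ∈ T, C p, hT.biUnion fun p _ => hC p, ?_⟩
  rintro _ ⟨w, hw, rfl⟩
  obtain ⟨n, hn⟩ : ∃ n, CountablyHit f (cylinder w n) := by simpa [hitKernel] using hw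
  have hwT : w ∈ ⋃ p ∈ T, cylinder p.1.1 p.1.2 :=
    hTU ▸ mem_iUnion.2 ⟨⟨(w, n), hn⟩, self_mem_cylinder w n⟩
  obtain ⟨p, hpT, hwp⟩ := mem_iUnion₂.1 hwT
  obtain ⟨i, hi⟩ := hCp p _ (mem_image_of_mem f hwp)
  exact ⟨i, mem_iUnion₂.2 ⟨p, hpT, hi⟩⟩

theorem exists_coordwise_ne_of_not_countablyHit [Countable ι] {u : ℕ → ℕ} {n : ℕ}
    (h : ¬CountablyHit f (cylinder u n)) :
    ∃ v ∈ cylinder u n ∩ hitKernel f, ∃ w ∈ cylinder u n ∩ hitKernel f, ∀ i, f v i ≠ f w i := by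
  obtain ⟨C, hC, hCK⟩ := countablyHit_compl_hitKernel f
  obtain ⟨v, hv⟩ : (cylinder u n ∩ hitKernel f).Nonempty := by
    by_contra! hempty
    rw [← disjoint_iff_inter_eq_empty] at hempty
    exact h ⟨C, hC, hCK.mono subset_rfl (image_mono hempty.subset_compl_right)⟩
  refine ⟨v, hv, ?_⟩
  by_contra! hsame
  refine h ⟨C ∪ range (f v), hC.union (countable_range _), ?_⟩
  rintro _ ⟨w, hw, rfl⟩
  by_cases hwK : w ∈ hitKernel f
  · obtain ⟨i, hi⟩ := hsame w ⟨hw, hwK⟩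
    exact ⟨i, .inr ⟨i, hi⟩⟩
  · exact (hCK _ ⟨w, hwK, rfl⟩).imp fun i hi => .inl hi

variable [Finite ι] [TopologicalSpace Y] [T2Space Y] {f}

theorem exists_split_of_mem_hitKernel (hf : Continuous f) {u : ℕ → ℕ} (hu : u ∈ hitKernel f)
    (n : ℕ) :
    ∃ c : Bool → (ℕ → ℕ) × ℕ,
      (∀ b, (c b).1 ∈ hitKernel f ∧ n < (c b).2 ∧ (c b).1 ∈ cylinder u n) ∧
      ∀ i, Pairwise (Disjoint on fun b => (f · i) '' cylinder (c b).1 (c b).2) := by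
  obtain ⟨v, ⟨hvu, hvK⟩, w, ⟨hwu, hwK⟩, hvw⟩ :=
    exists_coordwise_ne_of_not_countablyHit f (hu n)
  choose U V hU hV hvU hwV hUV using fun i => t2_separation (hvw i)
  have hbox : ∀ O : ι → Set Y, (∀ i, IsOpen (O i)) → IsOpen (⋂ i, (f · i) ⁻¹' O i) :=
    fun O hO => isOpen_iInter_of_finite fun i => (hO i).preimage ((continuous_apply i).comp hf)
  obtain ⟨m, hm⟩ := exists_cylinder_subset (hbox U hU) (mem_iInter.2 hvU)
  obtain ⟨m', hm'⟩ := exists_cylinder_subset (hbox V hV) (mem_iInter.2 hwV)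
  let c : Bool → (ℕ → ℕ) × ℕ := fun b => bif b then (w, max m' (n + 1)) else (v, max m (n + 1))
  refine ⟨c, fun b => ?_, fun i => ?_⟩
  · cases b
    · exact ⟨hvK, by simp [c], hvu⟩
    · exact ⟨hwK, by simp [c], hwu⟩
  have himage : (fun b => (f · i) '' cylinder (c b).1 (c b).2) = fun b =>
      cond b ((f · i) '' cylinder w (max m' (n + 1))) ((f · i) '' cylinder v (max m (n + 1))) := by
    ext b : 1
    cases b <;> rfl
  rw [himage, pairwise_disjoint_on_bool]
  refine (hUV i).symm.mono ?_ ?_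
  · rintro _ ⟨x, hx, rfl⟩
    exact mem_iInter.1 (hm' (cylinder_anti _ (le_max_left _ _) hx)) i
  · rintro _ ⟨x, hx, rfl⟩
    exact mem_iInter.1 (hm (cylinder_anti _ (le_max_left _ _) hx)) i

theorem exists_disjoint_cantorScheme (hf : Continuous f) (hK : (hitKernel f).Nonempty) :
    ∃ node : List Bool → (ℕ → ℕ) × ℕ, (∀ t, t.length ≤ (node t).2) ∧
      (∀ t b, cylinder (node (b :: t)).1 (node (b :: t)).2 ⊆ cylinder (node t).1 (node t).2) ∧
      ∀ t i, Pairwise (Disjoint on fun b =>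
        (f · i) '' cylinder (node (b :: t)).1 (node (b :: t)).2) := by
  obtain ⟨u₀, hu₀⟩ := hK
  choose! c hc using fun p : (ℕ → ℕ) × ℕ =>
    exists_split_of_mem_hitKernel hf (u := p.1) (n := p.2)
  let node : List Bool → (ℕ → ℕ) × ℕ := fun t => t.foldr (fun b p => c p b) (u₀, 0)
  have hnode : ∀ t, (node t).1 ∈ hitKernel f := by
    intro t
    induction t with
    | nil => exact hu₀
    | cons b t ih => exact ((hc _ ih).1 b).1
  refine ⟨node, fun t => ?_, fun t b => ?_, fun t => (hc _ (hnode t)).2⟩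
  · induction t with
    | nil => exact Nat.zero_le _
    | cons b t ih => exact ih.trans_lt ((hc _ (hnode t)).1 b).2.1
  · obtain ⟨-, hlt, hmem⟩ := (hc _ (hnode t)).1 b
    exact (cylinder_anti _ hlt.le).trans (mem_cylinder_iff_eq.1 hmem).subset

theorem exists_coordwise_injective_of_not_countablyHit (hf : Continuous f)
    (h : ¬CountablyHit f univ) :
    ∃ z : (ℕ → Bool) → ℕ → ℕ, ∀ σ τ, σ ≠ τ → ∀ i, f (z σ) i ≠ f (z τ) i := by
  have hK : (hitKernel f).Nonempty := by
    by_contra! hK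
    exact h (by simpa [hK] using countablyHit_compl_hitKernel f)
  obtain ⟨node, hlen, hanti, hdisj⟩ := exists_disjoint_cantorScheme hf hK
  choose z hz using fun σ : ℕ → Bool =>
    exists_forall_mem_cylinder (u := fun k => (node (res σ k)).1)
      (len := fun k => (node (res σ k)).2) (antitone_nat_of_succ_le fun k => hanti (res σ k) (σ k))
      fun k => (res_length σ k).symm.trans_le (hlen (res σ k))
  refine ⟨z, fun σ τ hστ i hzi => ?_⟩
  set k := firstDiff σ τ
  have hres : res σ k = res τ k := res_eq_res.2 fun m hm => apply_eq_of_lt_firstDiff hm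
  have hσ := mem_image_of_mem (f · i) (hz σ (k + 1))
  have hτ := mem_image_of_mem (f · i) (hz τ (k + 1))
  rw [res_succ, hres] at hσ
  rw [res_succ] at hτ
  exact (hdisj _ i (apply_firstDiff_ne hστ)).ne_of_mem hσ hτ hzi

theorem MeasureTheory.AnalyticSet.exists_countable_hits {K : Set (ι → Y)} (hK : AnalyticSet K)
    {R : Set Y} (hR : #R < 𝔠) (hRK : Hits R K) : ∃ C : Set Y, C.Countable ∧ Hits C K := by
  rw [AnalyticSet] at hK
  rcases hK with rfl | ⟨f, hf, rfl⟩
  · exact ⟨∅, countable_empty, fun _ h => h.elim⟩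
  by_contra! h
  obtain ⟨z, hz⟩ := exists_coordwise_injective_of_not_countablyHit hf
    fun ⟨C, hC, hCK⟩ => h C hC (image_univ ▸ hCK)
  choose i hi using fun σ => hRK _ (mem_range_self (z σ))
  have hinj : Injective fun σ => (i σ, (⟨f (z σ) (i σ), hi σ⟩ : R)) := by
    intro σ τ hστ
    simp only [Prod.mk.injEq, Subtype.mk.injEq] at hστ
    by_contra hne
    exact hz σ τ hne (i σ) (hστ.1 ▸ hστ.2)
  have hle : 𝔠 ≤ #(ι × R) := by simpa using Cardinal.lift_mk_le_lift_mk_of_injective hinj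
  refine hle.not_gt ?_
  rw [Cardinal.mk_prod]
  refine Cardinal.mul_lt_of_lt Cardinal.aleph0_le_continuum ?_ (by simpa using hR)
  exact (Cardinal.lift_lt_aleph0.2 (Cardinal.lt_aleph0_of_finite ι)).trans
    Cardinal.aleph0_lt_continuum

theorem MeasureTheory.AnalyticSet.countable_of_mk_lt_continuum {s : Set Y} (hs : AnalyticSet s)
    (h : #s < 𝔠) : s.Countable := by
  have hK : AnalyticSet ((fun y (_ : Unit) => y) '' s) :=
    hs.image_of_continuous (continuous_pi fun _ => continuous_id)
  obtain ⟨C, hC, hCK⟩ := hK.exists_countable_hits h (by rintro _ ⟨y, hy, rfl⟩; exact ⟨(), hy⟩)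
  refine hC.mono fun y hy => ?_
  obtain ⟨_, hyC⟩ := hCK _ ⟨y, hy, rfl⟩
  exact hyC

end Hitting

section Sections

variable {X Y : Type u} {F : Set (X × Y)}

def injTuples (F : Set (X × Y)) (k : ℕ) : Set (X × (Fin k → Y)) :=
  {p | Injective p.2 ∧ ∀ i, (p.1, p.2 i) ∈ F}

def sectionCardGE (F : Set (X × Y)) (k : ℕ) : Set X := Prod.fst '' injTuples F k

theorem exists_mem_sectionCardGE_notMem_succ {x : X} (hfin : {y | (x, y) ∈ F}.Finite) :
    ∃ k, x ∈ sectionCardGE F k ∧ x ∉ sectionCardGE F (k + 1) := by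
  classical
  have := hfin.to_subtype
  have hex : ∃ k, x ∉ sectionCardGE F k := by
    refine ⟨Nat.card {y | (x, y) ∈ F} + 1, ?_⟩
    rintro ⟨⟨x', g⟩, ⟨hg, hgF⟩, hx'⟩
    simp only at hx'
    subst x'
    have := Nat.card_le_card_of_injective (fun i => (⟨g i, hgF i⟩ : {y | (x, y) ∈ F}))
      fun i j hij => hg (congrArg Subtype.val hij)
    rw [Nat.card_fin] at this
    exact Nat.not_succ_le_self _ this
  have h0 : Nat.find hex ≠ 0 := fun h =>
    (h ▸ Nat.find_spec hex) ⟨(x, Fin.elim0), ⟨fun i => i.elim0, fun i => i.elim0⟩, rfl⟩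
  obtain ⟨k, hk⟩ := Nat.exists_eq_succ_of_ne_zero h0
  exact ⟨k, not_not.1 (Nat.find_min hex (by omega)), by simpa [hk] using Nat.find_spec hex⟩

theorem mem_range_of_notMem_sectionCardGE_succ {k : ℕ} {x : X} {g : Fin k → Y}
    (hg : (x, g) ∈ injTuples F k) (hx : x ∉ sectionCardGE F (k + 1)) {y : Y} (hy : (x, y) ∈ F) :
    y ∈ range g := by
  by_contra hy'
  exact hx ⟨(x, Fin.cons y g), ⟨Fin.cons_injective_iff.2 ⟨hy', hg.1⟩, Fin.cases hy hg.2⟩, rfl⟩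

theorem mk_image_lt_continuum_of_finite_sections (hfin : ∀ x, {y | (x, y) ∈ F}.Finite)
    {A : Set X} (hA : #A < 𝔠) :
    #{y | ∃ x ∈ A, (x, y) ∈ F} < 𝔠 := by
  have : {y | ∃ x ∈ A, (x, y) ∈ F} = ⋃ x ∈ A, {y | (x, y) ∈ F} := by ext; simp
  rw [this]
  refine (Cardinal.mk_biUnion_le _ A).trans_lt
    (Cardinal.mul_lt_of_lt Cardinal.aleph0_le_continuum hA ?_)
  exact (ciSup_le' fun x : A => (hfin x).lt_aleph0.le).trans_lt Cardinal.aleph0_lt_continuum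

variable [TopologicalSpace X] [TopologicalSpace Y] [PolishSpace X] [PolishSpace Y]

theorem analyticSet_injTuples (hF : AnalyticSet F) (k : ℕ) : AnalyticSet (injTuples F k) := by
  have : injTuples F k = {p | Injective p.2} ∩ ⋂ i, (fun p => (p.1, p.2 i)) ⁻¹' F := by
    ext; simp [injTuples]
  rw [this]
  refine (isOpen_setOf_injective.preimage continuous_snd).analyticSet.inter
    (analyticSet_iInter_of_countable fun i => hF.preimage ?_)
  fun_prop

theorem analyticSet_sectionCardGE (hF : AnalyticSet F) (k : ℕ) :
    AnalyticSet (sectionCardGE F k) :=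
  (analyticSet_injTuples hF k).image_of_continuous continuous_fst

variable {I : Set (Set X)} (hI : IsSigmaIdeal I) (hsec : ∀ y, {x | (x, y) ∈ F} ∈ I)
include hI hsec

theorem exists_mem_notMem_of_mk_lt_continuum (hproj : univ \ Prod.fst '' F ∈ I)
    (hF : AnalyticSet F) {C : Set X} (hC : AnalyticSet C) (hCI : C ∉ I) {R : Set Y}
    (hR : #R < 𝔠) : ∃ x ∈ C, ∃ y ∉ R, (x, y) ∈ F := by
  by_contra! h
  have himage : AnalyticSet (Prod.snd '' (F ∩ Prod.fst ⁻¹' C)) :=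
    (hF.inter (hC.preimage continuous_fst)).image_of_continuous continuous_snd
  have hsub : Prod.snd '' (F ∩ Prod.fst ⁻¹' C) ⊆ R := by
    rintro _ ⟨⟨x, y⟩, ⟨hxy, hx⟩, rfl⟩
    exact by_contra fun hy => h x hx y hy hxy
  have hcount :=
    himage.countable_of_mk_lt_continuum ((Cardinal.mk_le_mk_of_subset hsub).trans_lt hR)
  refine hCI (hI.mem_of_subset (fun x hx => ?_)
    (hI.union_mem (hI.setOf_exists_mem_mem hsec hcount) hproj))
  by_cases hxF : x ∈ Prod.fst '' F
  · obtain ⟨⟨_, y⟩, hxy, rfl⟩ := hxF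
    exact .inl ⟨y, ⟨_, ⟨hxy, hx⟩, rfl⟩, hxy⟩
  · exact .inr ⟨trivial, hxF⟩

variable [MeasurableSpace X] [BorelSpace X]

theorem exists_mem_forall_notMem_of_mk_lt_continuum (hccc : IsCCC I)
    (hfin : ∀ x, {y | (x, y) ∈ F}.Finite) (hF : AnalyticSet F) {C : Set X} (hC : AnalyticSet C)
    (hCI : C ∉ I) {R : Set Y} (hR : #R < 𝔠) : ∃ x ∈ C, ∀ y ∈ R, (x, y) ∉ F := by
  by_contra! hcov
  obtain ⟨k, hk⟩ : ∃ k, (C ∩ sectionCardGE F k) \ sectionCardGE F (k + 1) ∉ I := by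
    by_contra! h
    refine hCI (hI.mem_of_subset (fun x hx => ?_) (hI.iUnion_mem h))
    obtain ⟨k, hk, hk'⟩ := exists_mem_sectionCardGE_notMem_succ (hfin x)
    exact mem_iUnion.2 ⟨k, ⟨hx, hk⟩, hk'⟩
  obtain ⟨B, hBsub, hB, hBI⟩ := hI.exists_measurableSet_subset_sdiff_notMem hccc
    (hC.inter (analyticSet_sectionCardGE hF k)) (analyticSet_sectionCardGE hF (k + 1)) hk
  -- over `B` every section has exactly `k` points, so an injective `k`-tuple in it lists it all
  have hRK : Hits R (Prod.snd '' (injTuples F k ∩ Prod.fst ⁻¹' B)) := by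
    rintro _ ⟨⟨x, g⟩, ⟨hg, hxB⟩, rfl⟩
    obtain ⟨y, hyR, hxy⟩ := hcov x (hBsub hxB).1.1
    obtain ⟨i, rfl⟩ := mem_range_of_notMem_sectionCardGE_succ hg (hBsub hxB).2 hxy
    exact ⟨i, hyR⟩
  obtain ⟨C₀, hC₀, hC₀K⟩ := ((analyticSet_injTuples hF k).inter
    (hB.analyticSet.preimage continuous_fst)).image_of_continuous continuous_snd
    |>.exists_countable_hits hR hRK
  refine hBI (hI.mem_of_subset (fun x hx => ?_) (hI.setOf_exists_mem_mem hsec hC₀))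
  obtain ⟨⟨_, g⟩, hg, rfl⟩ := (hBsub hx).1.2
  obtain ⟨i, hi⟩ := hC₀K g ⟨_, ⟨hg, hx⟩, rfl⟩
  exact ⟨g i, hi, hg.2 i⟩

theorem exists_separating_step (hccc : IsCCC I) (hproj : univ \ Prod.fst '' F ∈ I)
    (hfin : ∀ x, {y | (x, y) ∈ F}.Finite) (hF : AnalyticSet F) {C : Set X} (hC : AnalyticSet C)
    (hCI : C ∉ I) {A : Set X} (hA : #A < 𝔠) {R : Set Y} (hR : #R < 𝔠) :
    ∃ a ∈ C, ∃ b ∈ C, ∃ y, (b, y) ∈ F ∧ (a, y) ∉ F ∧ (∀ y' ∈ R, (a, y') ∉ F) ∧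
      ∀ x ∈ A, (x, y) ∉ F := by
  obtain ⟨a, haC, haR⟩ :=
    exists_mem_forall_notMem_of_mk_lt_continuum hI hsec hccc hfin hF hC hCI hR
  have hA' : #(insert a A : Set X) < 𝔠 := Cardinal.mk_insert_le.trans_lt <|
    Cardinal.add_lt_of_lt Cardinal.aleph0_le_continuum hA
      (Cardinal.one_lt_aleph0.trans Cardinal.aleph0_lt_continuum)
  obtain ⟨b, hbC, y, hy, hby⟩ := exists_mem_notMem_of_mk_lt_continuum hI hsec hproj hF hC hCI
    (mk_image_lt_continuum_of_finite_sections hfin hA')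
  exact ⟨a, haC, b, hbC, y, hby, fun h => hy ⟨a, mem_insert _ _, h⟩, haR,
    fun x hx h => hy ⟨x, mem_insert_of_mem _ hx, h⟩⟩

theorem exists_separating_family (hccc : IsCCC I) (hproj : univ \ Prod.fst '' F ∈ I)
    (hfin : ∀ x, {y | (x, y) ∈ F}.Finite) (hF : AnalyticSet F) {ι : Type u} (C : ι → Set X)
    (hC : ∀ i, AnalyticSet (C i)) (hCI : ∀ i, C i ∉ I) (hι : #ι ≤ 𝔠) :
    ∃ (a b : ι → X) (y : ι → Y),
      ∀ i, a i ∈ C i ∧ b i ∈ C i ∧ (b i, y i) ∈ F ∧ ∀ j, (a i, y j) ∉ F := by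
  obtain ⟨r, hr, hseg⟩ := Cardinal.exists_wellOrder_mk_lt hι
  -- `v i = (a i, b i, y i)`, where `a i` avoids the earlier `y j` and `y i` the earlier `a j`
  obtain ⟨v, hv⟩ := hr.wf.exists_forall_choice (α := X × X × Y)
    (P := fun i prior v => v.1 ∈ C i ∧ v.2.1 ∈ C i ∧ (v.2.1, v.2.2) ∈ F ∧ (v.1, v.2.2) ∉ F ∧
      (∀ j, (v.1, (prior j).2.2) ∉ F) ∧ ∀ j, ((prior j).1, v.2.2) ∉ F) fun i prior => by
    obtain ⟨a, ha, b, hb, y, hby, hay, haR, hAy⟩ :=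
      exists_separating_step hI hsec hccc hproj hfin hF (hC i) (hCI i)
        (Cardinal.mk_range_le.trans_lt (hseg i)) (Cardinal.mk_range_le.trans_lt (hseg i))
    exact ⟨(a, b, y), ha, hb, hby, hay, fun j => haR _ (mem_range_self j),
      fun j => hAy _ (mem_range_self j)⟩
  refine ⟨fun i => (v i).1, fun i => (v i).2.1, fun i => (v i).2.2, fun i => ?_⟩
  obtain ⟨ha, hb, hby, hay, hay_prev, -⟩ := hv i
  refine ⟨ha, hb, hby, fun j => ?_⟩
  rcases trichotomous_of r i j with hij | rfl | hji
  · obtain ⟨-, -, -, -, -, hy_prev⟩ := hv j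
    exact hy_prev ⟨i, hij⟩
  · exact hay
  · exact hay_prev ⟨j, hji⟩

end Sections

theorem stmt_10_general {X : Type} [TopologicalSpace X] [PolishSpace X]
    [MeasurableSpace X] [BorelSpace X]
    {Y : Type} [TopologicalSpace Y] [PolishSpace Y]
    (𝓘 : Set (Set X))
    (hDown : ∀ A B : Set X, A ⊆ B → B ∈ 𝓘 → A ∈ 𝓘)
    (hUnion : ∀ f : ℕ → Set X, (∀ n, f n ∈ 𝓘) → (⋃ n, f n) ∈ 𝓘)
    (hccc : ∀ 𝒟 : Set (Set X), (∀ D ∈ 𝒟, MeasurableSet D ∧ D ∉ 𝓘) →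
      𝒟.PairwiseDisjoint id → 𝒟.Countable)
    (F : Set (X × Y)) (hF : MeasureTheory.AnalyticSet F)
    (h1 : ∀ y : Y, {x : X | (x, y) ∈ F} ∈ 𝓘)
    (h2 : univ \ Prod.fst '' F ∈ 𝓘)
    (h3 : ∀ x : X, {y : Y | (x, y) ∈ F}.Finite) :
    ∃ T : Set Y, ∀ B : Set X, MeasurableSet B → B ∉ 𝓘 →
      ({x : X | ({y : Y | (x, y) ∈ F} ∩ T).Nonempty} ∩ B).Nonempty ∧
        (B \ {x : X | ({y : Y | (x, y) ∈ F} ∩ T).Nonempty}).Nonempty := by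
  have hI : IsSigmaIdeal 𝓘 := ⟨hDown _ _ (empty_subset _) h2, hDown _ _, hUnion⟩
  let Pos := {C : Set X // MeasurableSet C ∧ C ∉ 𝓘}
  have hPos : #Pos ≤ 𝔠 := (Cardinal.mk_subtype_mono fun _ hC => hC.1).trans
    MeasurableSpace.mk_setOf_measurableSet_le_continuum
  obtain ⟨a, b, y, hy⟩ := exists_separating_family hI h1 hccc h2 h3 hF (fun C : Pos => C.1)
    (fun C => C.2.1.analyticSet) (fun C => C.2.2) hPos
  refine ⟨range y, fun B hB hBI => ?_⟩
  obtain ⟨ha, hb, hby, hay⟩ := hy ⟨B, hB, hBI⟩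
  exact ⟨⟨b _, ⟨y _, hby, mem_range_self _⟩, hb⟩, a _, ha, fun ⟨_, hF, j, hj⟩ => hay j (hj ▸ hF)⟩

theorem stmt_10 {X : Type} [TopologicalSpace X] [PolishSpace X] [Uncountable X]
    [MeasurableSpace X] [BorelSpace X]
    {Y : Type} [TopologicalSpace Y] [PolishSpace Y] [MeasurableSpace Y] [BorelSpace Y]
    (𝓘 : Set (Set X))
    (hDown : ∀ A B : Set X, A ⊆ B → B ∈ 𝓘 → A ∈ 𝓘)
    (hUnion : ∀ f : ℕ → Set X, (∀ n, f n ∈ 𝓘) → (⋃ n, f n) ∈ 𝓘)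
    (hProper : (univ : Set X) ∉ 𝓘)
    (hSing : ∀ x : X, ({x} : Set X) ∈ 𝓘)
    (hBase : ∀ A ∈ 𝓘, ∃ B : Set X, A ⊆ B ∧ MeasurableSet B ∧ B ∈ 𝓘)
    (hccc : ∀ 𝒟 : Set (Set X), (∀ D ∈ 𝒟, MeasurableSet D ∧ D ∉ 𝓘) →
      𝒟.PairwiseDisjoint id → 𝒟.Countable)
    (F : Set (X × Y)) (hF : MeasureTheory.AnalyticSet F)
    (h1 : ∀ y : Y, {x : X | (x, y) ∈ F} ∈ 𝓘)
    (h2 : univ \ Prod.fst '' F ∈ 𝓘)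
    (h3 : ∀ x : X, {y : Y | (x, y) ∈ F}.Finite) :
    ∃ T : Set Y, ∀ B : Set X, MeasurableSet B → B ∉ 𝓘 →
      ({x : X | ({y : Y | (x, y) ∈ F} ∩ T).Nonempty} ∩ B).Nonempty ∧
        (B \ {x : X | ({y : Y | (x, y) ∈ F} ∩ T).Nonempty}).Nonempty :=
  stmt_10_general 𝓘 hDown hUnion hccc F hF h1 h2 h3
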